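/- arXiv:2402.07015 — 2 statements merged into one kernel-verified Lean document; each statement's English description precedes it below -/
import Mathlib

section
/- The sequence θ is square-free: there do not exist i, n : ℕ with n ≥ 1 such that θ (i + j) = θ (i + n + j) for all j < n, where θ : ℕ → ℕ is defined by θ 0 = (if t 0 then 1 else 0) and, for n ≥ 0, θ (n+1) = 2 if t n = t (n+1), θ (n+1) = 1 if t (n+1) = true ≠ t n, and θ (n+1) = 0 if t (n+1) = false ≠ t n. -/
/-- The Thue–Morse sequence: `t n = true` iff the number of 1s in the
binary expansion of `n` is odd. -/
def thueMorse (n : ℕ) : Bool := (Nat.digits 2 n).count 1 % 2 == 1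

/-- The sequence `θ` obtained from the Thue–Morse sequence by replacing
the second digit of each factor 00 or 11 by 2. -/
def theta : ℕ → ℕ
  | 0 => if thueMorse 0 then 1 else 0
  | (n + 1) =>
      if thueMorse n = thueMorse (n + 1) then 2
      else (if thueMorse (n + 1) then 1 else 0)

lemma tm_two_mul (k : ℕ) : thueMorse (2 * k) = thueMorse k := by
  rcases Nat.eq_zero_or_pos k with rfl | hk
  · rfl
  · unfold thueMorse
    rw [Nat.digits_def' (by norm_num : 1 < 2) (by omega)]
    have h1 : 2 * k % 2 = 0 := by omega
    have h2 : 2 * k / 2 = k := by omega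
    rw [h1, h2]
    simp [List.count_cons]

lemma tm_two_mul_add_one (k : ℕ) : thueMorse (2 * k + 1) = ! thueMorse k := by
  unfold thueMorse
  rw [Nat.digits_def' (by norm_num : 1 < 2) (by omega)]
  have h1 : (2 * k + 1) % 2 = 1 := by omega
  have h2 : (2 * k + 1) / 2 = k := by omega
  rw [h1, h2]
  simp only [List.count_cons, if_pos rfl]
  generalize (Nat.digits 2 k).count 1 = c
  show ((c + 1) % 2 == 1) = !(c % 2 == 1)
  rcases Nat.even_or_odd c with ⟨d, hd⟩ | ⟨d, hd⟩
  · have e1 : (c + 1) % 2 = 1 := by omega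
    have e2 : c % 2 = 0 := by omega
    rw [e1, e2]
    rfl
  · have e1 : (c + 1) % 2 = 0 := by omega
    have e2 : c % 2 = 1 := by omega
    rw [e1, e2]
    rfl

lemma tm_pair_odd {y : ℕ} (h : thueMorse y = thueMorse (y + 1)) : y % 2 = 1 := by
  by_contra hodd
  obtain ⟨k, rfl⟩ : ∃ k, y = 2 * k := ⟨y / 2, by omega⟩
  rw [tm_two_mul, tm_two_mul_add_one] at h
  cases thueMorse k <;> simp_all



lemma tm_no_overlap_odd (m n : ℕ) (hn : n % 2 = 1)
    (h : ∀ j ≤ n, thueMorse (m + j) = thueMorse (m + n + j)) : False := by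
  have hex : ∃ j < n, thueMorse (m + j) = thueMorse (m + j + 1) := by
    by_contra hc
    push_neg at hc
    have key : ∀ j ≤ n, thueMorse (m + j) = xor (thueMorse m) (decide (j % 2 = 1)) := by
      intro j hj
      induction j with
      | zero => simp
      | succ j ih =>
        have hne := hc j (by omega)
        have e : m + j + 1 = m + (j + 1) := by ring
        rw [e] at hne
        have hflip : thueMorse (m + (j + 1)) = ! thueMorse (m + j) := by
          cases h1 : thueMorse (m + j) <;> cases h2 : thueMorse (m + (j + 1)) <;> simp_all
        rw [hflip, ih (by omega)]
        rcases Nat.even_or_odd j with he | he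
        · have e1 : j % 2 = 0 := Nat.even_iff.mp he
          have e2 : (j + 1) % 2 = 1 := by omega
          rw [e1, e2]
          cases thueMorse m <;> rfl
        · have e1 : j % 2 = 1 := Nat.odd_iff.mp he
          have e2 : (j + 1) % 2 = 0 := by omega
          rw [e1, e2]
          cases thueMorse m <;> rfl
    have h0 := h 0 (by omega)
    have hnn := key n le_rfl
    rw [hn] at hnn
    simp only [Nat.add_zero] at h0
    rw [← h0] at hnn
    simp at hnn
  obtain ⟨j0, hj0, heq⟩ := hex
  have p1 : (m + j0) % 2 = 1 := tm_pair_odd heq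
  have e1 : thueMorse (m + n + j0) = thueMorse (m + n + j0 + 1) := by
    have a1 := h j0 (by omega)
    have a2 := h (j0 + 1) (by omega)
    rw [show m + (j0 + 1) = m + j0 + 1 by ring] at a2
    rw [show m + n + (j0 + 1) = m + n + j0 + 1 by ring] at a2
    rw [← a1, ← a2]
    exact heq
  have p2 : (m + n + j0) % 2 = 1 := tm_pair_odd e1
  omega

lemma tm_no_overlap : ∀ n, 1 ≤ n → ∀ m, ¬ (∀ j ≤ n, thueMorse (m + j) = thueMorse (m + n + j)) := by
  intro n
  induction n using Nat.strong_induction_on with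
  | _ n ih =>
    intro hn m h
    rcases Nat.even_or_odd n with ⟨p, hp⟩ | ho
    · have hp1 : 1 ≤ p := by omega
      apply ih p (by omega) hp1 (m / 2)
      intro s hs
      have h2 := h (2 * s) (by omega)
      rcases Nat.even_or_odd m with ⟨q, hq⟩ | ⟨q, hq⟩
      · rw [show m + 2 * s = 2 * (q + s) by omega,
           show m + n + 2 * s = 2 * (q + p + s) by omega,
           tm_two_mul, tm_two_mul] at h2
        rw [show m / 2 = q by omega]
        exact h2
      · rw [show m + 2 * s = 2 * (q + s) + 1 by omega,
           show m + n + 2 * s = 2 * (q + p + s) + 1 by omega,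
           tm_two_mul_add_one, tm_two_mul_add_one] at h2
        have h3 : thueMorse (q + s) = thueMorse (q + p + s) := by
          cases h4 : thueMorse (q + s) <;> simp_all
        rw [show m / 2 = q by omega]
        exact h3
    · exact tm_no_overlap_odd m n (Nat.odd_iff.mp ho) h


lemma theta_transfer (a b : ℕ) (h : theta (a + 1) = theta (b + 1)) :
    (thueMorse a = thueMorse b) ↔ (thueMorse (a + 1) = thueMorse (b + 1)) := by
  unfold theta at h
  cases ha : thueMorse a <;> cases ha1 : thueMorse (a + 1) <;>
    cases hb : thueMorse b <;> cases hb1 : thueMorse (b + 1) <;>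
    simp [ha, ha1, hb, hb1] at h ⊢

lemma theta_iff (a b : ℕ) (h : theta (a + 1) = theta (b + 1))
    (h2 : thueMorse a = thueMorse (a + 1)) : thueMorse b = thueMorse (b + 1) := by
  unfold theta at h
  cases ha : thueMorse a <;> cases ha1 : thueMorse (a + 1) <;>
    cases hb : thueMorse b <;> cases hb1 : thueMorse (b + 1) <;>
    simp [ha, ha1, hb, hb1] at h h2 ⊢

lemma theta_anchor (a b : ℕ) (h : theta (a + 1) = theta (b + 1))
    (hne : thueMorse a ≠ thueMorse (a + 1)) : thueMorse (a + 1) = thueMorse (b + 1) := by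
  unfold theta at h
  cases ha : thueMorse a <;> cases ha1 : thueMorse (a + 1) <;>
    cases hb : thueMorse b <;> cases hb1 : thueMorse (b + 1) <;>
    simp [ha, ha1, hb, hb1] at h hne ⊢

lemma theta_zero_val (a : ℕ) (h : theta (a + 1) = 0) : thueMorse (a + 1) = false := by
  unfold theta at h
  cases ha1 : thueMorse (a + 1)
  · rfl
  · cases ha : thueMorse a <;> simp [ha, ha1] at h

lemma prop_connect (P : ℕ → Prop) (n k : ℕ) (hk : k ≤ n) (anchor : P k)
    (step : ∀ j < n, (P j ↔ P (j + 1))) : ∀ j ≤ n, P j := by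
  have up : ∀ d, k + d ≤ n → P (k + d) := by
    intro d
    induction d with
    | zero => intro _; simpa using anchor
    | succ d ihd =>
      intro hdn
      have hP := ihd (by omega)
      have := (step (k + d) (by omega)).mp hP
      rwa [show k + d + 1 = k + (d + 1) by ring] at this
  have down : ∀ d, d ≤ k → P (k - d) := by
    intro d
    induction d with
    | zero => intro _; simpa using anchor
    | succ d ihd =>
      intro hd
      have hP := ihd (by omega)
      rw [show k - d = (k - (d + 1)) + 1 by omega] at hP
      exact (step (k - (d + 1)) (by omega)).mpr hP
  intro j hj
  rcases le_or_gt k j with hkj | hkj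
  · have := up (j - k) (by omega)
    rwa [show k + (j - k) = j by omega] at this
  · have := down (k - j) (by omega)
    rwa [show k - (k - j) = j by omega] at this

/-- The sequence `θ` is square-free. -/
theorem theta_squareFree :
    ¬ ∃ (i n : ℕ), 1 ≤ n ∧ ∀ j < n, theta (i + j) = theta (i + n + j) := by
  rintro ⟨i, n, hn, hsq⟩
  cases i with
  | zero =>
    have ht0 : thueMorse 0 = false := by simp [thueMorse]
    have hth0 : theta 0 = 0 := by rw [show theta 0 = if thueMorse 0 then 1 else 0 from rfl, ht0]; rfl
    have h0 := hsq 0 hn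
    simp only [Nat.zero_add, Nat.add_zero] at h0
    -- h0 : theta 0 = theta n
    obtain ⟨n', rfl⟩ : ∃ n', n = n' + 1 := ⟨n - 1, by omega⟩
    have hthn : theta (n' + 1) = 0 := by rw [← h0, hth0]
    have htn : thueMorse (n' + 1) = false := theta_zero_val n' hthn
    set n := n' + 1 with hn'
    have anchor : thueMorse 0 = thueMorse (n + 0) := by
      rw [Nat.add_zero, ht0, htn]
    have step : ∀ j < n - 1, ((thueMorse j = thueMorse (n + j)) ↔
        (thueMorse (j + 1) = thueMorse (n + (j + 1)))) := by
      intro j hj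
      have h := hsq (j + 1) (by omega)
      rw [show 0 + (j + 1) = j + 1 by ring, show 0 + n + (j + 1) = (n + j) + 1 by ring] at h
      have := theta_transfer j (n + j) h
      rwa [show n + j + 1 = n + (j + 1) by ring] at this
    have allP := prop_connect (fun j => thueMorse j = thueMorse (n + j)) (n - 1) 0
      (by omega) anchor step
    apply tm_no_overlap n hn 0
    intro j hj
    rcases Nat.lt_or_ge j n with hjn | hjn
    · have := allP j (by omega)
      simpa using this
    · have hjn' : j = n := by omega
      subst hjn'
      show thueMorse (0 + n) = thueMorse (0 + n + n)
      rw [Nat.zero_add, show n + n = 2 * n by ring, tm_two_mul]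
  | succ i' =>
    have step : ∀ j < n, ((thueMorse (i' + j) = thueMorse (i' + n + j)) ↔
        (thueMorse (i' + (j + 1)) = thueMorse (i' + n + (j + 1)))) := by
      intro j hj
      have h := hsq j hj
      rw [show i' + 1 + j = (i' + j) + 1 by ring, show i' + 1 + n + j = (i' + n + j) + 1 by ring] at h
      have := theta_transfer (i' + j) (i' + n + j) h
      rwa [show i' + j + 1 = i' + (j + 1) by ring, show i' + n + j + 1 = i' + n + (j + 1) by ring] at this
    by_cases hA : ∀ j < n, thueMorse (i' + j) = thueMorse (i' + j + 1)
    · have h1 : thueMorse i' = thueMorse (i' + 1) := by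
        have := hA 0 (by omega); simpa using this
      have h2 : thueMorse (i' + 1) = thueMorse (i' + 1 + 1) := by
        rcases Nat.lt_or_ge 1 n with hn2 | hn2
        · have := hA 1 hn2
          rwa [show i' + 1 + 1 = i' + 1 + 1 by rfl] at this
        · have hn1 : n = 1 := by omega
          have h := hsq 0 (by omega)
          rw [hn1] at h
          rw [show i' + 1 + 0 = i' + 1 by ring, show i' + 1 + 1 + 0 = (i' + 1) + 1 by ring] at h
          exact theta_iff i' (i' + 1) h h1
      have p1 := tm_pair_odd h1
      have p2 := tm_pair_odd h2
      omega
    · push_neg at hA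
      obtain ⟨j0, hj0, hne⟩ := hA
      have hth := hsq j0 hj0
      rw [show i' + 1 + j0 = (i' + j0) + 1 by ring,
         show i' + 1 + n + j0 = (i' + n + j0) + 1 by ring] at hth
      have anchor : thueMorse (i' + (j0 + 1)) = thueMorse (i' + n + (j0 + 1)) := by
        have := theta_anchor (i' + j0) (i' + n + j0) hth hne
        rwa [show i' + j0 + 1 = i' + (j0 + 1) by ring,
            show i' + n + j0 + 1 = i' + n + (j0 + 1) by ring] at this
      have allP := prop_connect (fun j => thueMorse (i' + j) = thueMorse (i' + n + j)) n
        (j0 + 1) (by omega) anchor step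
      exact tm_no_overlap n hn i' allP
end

section
/- For every m ≥ 1 and every word b : Fin m → Bool, the sequence x : ℕ → Bool defined by x (m * q + r) = xor (b r) (t q) for r < m (the concatenation b · b̄ · b̄ · b · ⋯ following the flipping pattern of the Thue–Morse sequence, where b̄ is the letter-by-letter complement of b) is a Morse-type minimal point: the orbit closure closure {σ^[k] x | k : ℕ} is minimal and uncountable. -/
/-- The shift map on the one-sided binary full shift. -/
def shift (x : ℕ → Bool) : ℕ → Bool := fun n => x (n + 1)

open Set Function Filter Topology PiNat

theorem thueMorse_zero : thueMorse 0 = false := by simp [thueMorse]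

theorem thueMorse_one : thueMorse 1 = true := by simp [thueMorse]

theorem thueMorse_two_mul (n : ℕ) : thueMorse (2 * n) = thueMorse n := by
  rcases Nat.eq_zero_or_pos n with rfl | hn
  · rfl
  · simp [thueMorse, Nat.digits_def' (by norm_num : 1 < 2) (by omega : 0 < 2 * n)]

theorem thueMorse_two_mul_add_one (n : ℕ) : thueMorse (2 * n + 1) = !thueMorse n := by
  simp only [thueMorse, Nat.digits_def' (by norm_num : 1 < 2) (by omega : 0 < 2 * n + 1),
    Nat.mul_add_mod_self_left, Nat.mul_add_div two_pos, List.count_cons_self]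
  rcases Nat.mod_two_eq_zero_or_one ((Nat.digits 2 n).count 1) with h | h <;>
    simp [Nat.add_mod, h]

theorem exists_thueMorse_eq_false (q : ℕ) : ∃ u, q ≤ u ∧ u ≤ q + 2 ∧ thueMorse u = false := by
  cases h : thueMorse ((q + 1) / 2)
  · exact ⟨2 * ((q + 1) / 2), by omega, by omega, by rw [thueMorse_two_mul, h]⟩
  · exact ⟨2 * ((q + 1) / 2) + 1, by omega, by omega, by rw [thueMorse_two_mul_add_one, h]; rfl⟩

theorem thueMorse_not_periodic {p : ℕ} (hp : 0 < p) : ¬ Periodic thueMorse p := by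
  intro hper
  have h := thueMorse_two_mul_add_one (p - 1)
  rw [show 2 * (p - 1) + 1 = p - 1 + p by omega, hper] at h
  cases thueMorse (p - 1) <;> simp at h

/-- `x` is the concatenation of the blocks `w, w̄, w̄, w, …` of length `m` following the
Thue–Morse pattern, where `w` is the prefix of length `m` of `x`. -/
def ThueMorseBlocks (m : ℕ) (x : ℕ → Bool) : Prop :=
  ∀ q r, r < m → x (m * q + r) = xor (thueMorse q) (x r)

namespace ThueMorseBlocks

variable {m : ℕ} {x : ℕ → Bool}

theorem two_mul (h : ThueMorseBlocks m x) : ThueMorseBlocks (2 * m) x := by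
  intro q r hr
  by_cases hrm : r < m
  · rw [show 2 * m * q + r = m * (2 * q) + r by ring, h _ _ hrm, thueMorse_two_mul]
  · obtain ⟨s, rfl⟩ := Nat.exists_eq_add_of_le (not_lt.1 hrm)
    have hs : s < m := by omega
    rw [show 2 * m * q + (m + s) = m * (2 * q + 1) + s by ring, h _ _ hs,
      thueMorse_two_mul_add_one, ← mul_one m, h 1 s hs, thueMorse_one]
    cases thueMorse q <;> simp

theorem mul_two_pow (h : ThueMorseBlocks m x) (a : ℕ) : ThueMorseBlocks (m * 2 ^ a) x := by
  induction a with
  | zero => simpa using h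
  | succ a ih => simpa [pow_succ, mul_comm, mul_left_comm] using ih.two_mul

/-- `x (s + p)` and `x s` are compared through their copies in the block of length
`M > s + p` starting at `M * k ≥ k`. -/
theorem periodic_of_eventually (h : ThueMorseBlocks m x) (hm : 0 < m) {k p : ℕ}
    (hper : ∀ n ≥ k, x (n + p) = x n) : Periodic x p := by
  intro s
  have hM : s + p < m * 2 ^ (s + p) :=
    Nat.lt_two_pow_self.trans_le (Nat.le_mul_of_pos_left _ hm)
  have hk : k ≤ m * 2 ^ (s + p) * k + s :=
    le_add_right (Nat.le_mul_of_pos_left _ (by positivity))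
  have := hper _ hk
  rwa [add_assoc, h.mul_two_pow _ _ _ hM, h.mul_two_pow _ _ _ (by omega),
    Bool.xor_right_inj] at this

theorem not_periodic (h : ThueMorseBlocks m x) (hm : 0 < m) {p : ℕ} (hp : 0 < p) :
    ¬ Periodic x p := by
  intro hper
  refine thueMorse_not_periodic hp fun q => ?_
  have := (hper.nat_mul m) (m * q + 0)
  rwa [Nat.cast_id, add_assoc, zero_add, ← mul_add, ← add_zero (m * (q + p)), h _ _ hm,
    h _ _ hm, Bool.xor_left_inj] at this

end ThueMorseBlocks

theorem shift_iterate_apply (k : ℕ) (x : ℕ → Bool) (n : ℕ) : shift^[k] x n = x (n + k) := by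
  induction k generalizing x with
  | zero => rfl
  | succ k ih => rw [iterate_succ_apply, ih, shift, add_assoc]

def IsUniformlyRecurrent (x : ℕ → Bool) : Prop :=
  ∀ L, ∃ N, ∀ k, ∃ j ≤ N, shift^[k + j] x ∈ cylinder x L

theorem ThueMorseBlocks.injective_shift_iterate {m : ℕ} {x : ℕ → Bool} (h : ThueMorseBlocks m x)
    (hm : 0 < m) : Injective fun k => shift^[k] x := by
  refine Injective.of_lt_imp_ne fun k k' hlt heq => h.not_periodic hm (Nat.sub_pos_of_lt hlt) ?_
  refine h.periodic_of_eventually hm (k := k) fun n hn => ?_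
  have := congrFun heq (n - k)
  simp only [shift_iterate_apply] at this
  rw [Nat.sub_add_cancel hn, show n - k + k' = n + (k' - k) by omega] at this
  exact this.symm

theorem ThueMorseBlocks.isUniformlyRecurrent {m : ℕ} {x : ℕ → Bool} (h : ThueMorseBlocks m x)
    (hm : 0 < m) : IsUniformlyRecurrent x := by
  intro L
  set M := m * 2 ^ L
  have hM : 0 < M := by positivity
  have hLM : L ≤ M := Nat.lt_two_pow_self.le.trans (Nat.le_mul_of_pos_left _ hm)
  refine ⟨3 * M, fun k => ?_⟩
  obtain ⟨u, hu, hu', htu⟩ := exists_thueMorse_eq_false (k / M + 1)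
  have hlo : k ≤ M * u := (Nat.lt_mul_div_succ k hM).le.trans (Nat.mul_le_mul_left M hu)
  have hhi : M * u ≤ k + 3 * M :=
    calc M * u ≤ M * (k / M) + 3 * M := by
          rw [mul_comm 3 M, ← mul_add]; exact Nat.mul_le_mul_left M (by omega)
      _ ≤ k + 3 * M := by gcongr; exact Nat.mul_div_le k M
  refine ⟨M * u - k, by omega, mem_cylinder_iff.2 fun i hi => ?_⟩
  rw [Nat.add_sub_cancel' hlo, shift_iterate_apply, add_comm,
    h.mul_two_pow L u i (by omega), htu, Bool.false_xor]

theorem IsUniformlyRecurrent.exists_lt_shift_iterate_mem_cylinder {x : ℕ → Bool}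
    (hx : IsUniformlyRecurrent x) (k L : ℕ) :
    ∃ k' > k, shift^[k'] x ∈ cylinder (shift^[k] x) L := by
  obtain ⟨N, hN⟩ := hx (k + L)
  obtain ⟨j, -, hj⟩ := hN 1
  refine ⟨k + (1 + j), by omega, mem_cylinder_iff.2 fun i hi => ?_⟩
  have := mem_cylinder_iff.1 hj (i + k) (by omega)
  simp only [shift_iterate_apply] at this ⊢
  rwa [← add_assoc]

theorem nhds_hasBasis_cylinder {E : ℕ → Type*} [∀ n, TopologicalSpace (E n)]
    [∀ n, DiscreteTopology (E n)] (x : ∀ n, E n) :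
    (𝓝 x).HasBasis (fun _ => True) (cylinder x) := by
  refine ⟨fun U => ⟨fun hU => ?_, fun ⟨n, _, hn⟩ => ?_⟩⟩
  · obtain ⟨_, ⟨y, n, rfl⟩, hx, hU⟩ := (isTopologicalBasis_cylinders E).mem_nhds_iff.1 hU
    exact ⟨n, trivial, (mem_cylinder_iff_eq.1 hx).symm ▸ hU⟩
  · exact mem_of_superset ((isOpen_cylinder E x n).mem_nhds (self_mem_cylinder x n)) hn

theorem IsUniformlyRecurrent.mem_closure_range_shift_iterate {x y : ℕ → Bool}
    (hx : IsUniformlyRecurrent x) (hy : y ∈ closure (range fun k => shift^[k] x)) :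
    x ∈ closure (range fun k => shift^[k] y) := by
  refine (mem_closure_iff_nhds_basis (nhds_hasBasis_cylinder x)).2 fun L _ => ?_
  obtain ⟨N, hN⟩ := hx L
  obtain ⟨_, ⟨k, rfl⟩, hk⟩ :=
    (mem_closure_iff_nhds_basis (nhds_hasBasis_cylinder y)).1 hy (N + L) trivial
  obtain ⟨j, hjN, hj⟩ := hN k
  refine ⟨shift^[j] y, ⟨j, rfl⟩, mem_cylinder_iff.2 fun i hi => ?_⟩
  have hyk := mem_cylinder_iff.1 hk (i + j) (by omega)
  have hxj := mem_cylinder_iff.1 hj i hi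
  simp only [shift_iterate_apply] at hyk hxj ⊢
  rwa [← hyk, add_assoc, add_comm j k]

theorem closure_range_iterate_subset {α : Type*} [TopologicalSpace α] {f : α → α} {K : Set α}
    (hK : IsClosed K) (hf : MapsTo f K K) {y : α} (hy : y ∈ K) :
    closure (range fun k => f^[k] y) ⊆ K :=
  closure_minimal (range_subset_iff.2 fun k => hf.iterate k hy) hK

theorem IsUniformlyRecurrent.eq_closure_range_shift_iterate {x : ℕ → Bool}
    (hx : IsUniformlyRecurrent x) {K : Set (ℕ → Bool)}
    (hKx : K ⊆ closure (range fun k => shift^[k] x)) (hne : K.Nonempty) (hK : IsClosed K)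
    (hinv : MapsTo shift K K) : K = closure (range fun k => shift^[k] x) := by
  obtain ⟨y, hy⟩ := hne
  have hxK : x ∈ K :=
    closure_range_iterate_subset hK hinv hy (hx.mem_closure_range_shift_iterate (hKx hy))
  exact hKx.antisymm (closure_range_iterate_subset hK hinv hxK)

theorem IsUniformlyRecurrent.preperfect_range_shift_iterate {x : ℕ → Bool}
    (hx : IsUniformlyRecurrent x) (hinj : Injective fun k => shift^[k] x) :
    Preperfect (range fun k => shift^[k] x) := by
  refine preperfect_iff_nhds.2 ?_
  rintro _ ⟨k, rfl⟩ U hU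
  obtain ⟨L, -, hL⟩ := (nhds_hasBasis_cylinder _).mem_iff.1 hU
  obtain ⟨k', hk', hmem⟩ := hx.exists_lt_shift_iterate_mem_cylinder k L
  exact ⟨_, ⟨hL hmem, k', rfl⟩, hinj.ne hk'.ne'⟩

theorem Perfect.not_countable {α : Type*} [TopologicalSpace α]
    [TopologicalSpace.IsCompletelyMetrizableSpace α] {C : Set α} (hC : Perfect C)
    (hne : C.Nonempty) : ¬ C.Countable := by
  intro h
  let := TopologicalSpace.upgradeIsCompletelyMetrizable α
  obtain ⟨f, hfC, -, hf⟩ := hC.exists_nat_bool_injection hne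
  have : Uncountable (ℕ → Bool) :=
    Cardinal.aleph0_lt_mk_iff.1 (by simp [Cardinal.aleph0_lt_continuum])
  exact this.not_countable (countable_univ_iff.1 <|
    (mapsTo_univ_iff.2 fun y => hfC (mem_range_self y)).countable_of_injOn hf.injOn h)

/-- For every nonempty word `b` of length `m`, the sequence obtained by
concatenating `b`, `b̄`, `b̄`, `b`, … following the flipping pattern of the
Thue–Morse sequence is a Morse-type minimal point: its orbit closure under
the shift map is minimal and uncountable. -/
theorem blockSubstituted_morseTypeMinimal (m : ℕ) (hm : 1 ≤ m)
    (b : Fin m → Bool) (x : ℕ → Bool)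
    (hx : ∀ q r : ℕ, ∀ h : r < m, x (m * q + r) = xor (b ⟨r, h⟩) (thueMorse q)) :
    (∀ K : Set (ℕ → Bool),
        K ⊆ closure {y : ℕ → Bool | ∃ k : ℕ, shift^[k] x = y} →
        K.Nonempty → IsClosed K → shift '' K ⊆ K →
        K = closure {y : ℕ → Bool | ∃ k : ℕ, shift^[k] x = y}) ∧
    ¬ (closure {y : ℕ → Bool | ∃ k : ℕ, shift^[k] x = y}).Countable := by
  have hblocks : ThueMorseBlocks m x := fun q r hr => by
    have hr0 := hx 0 r hr
    rw [mul_zero, zero_add, thueMorse_zero, Bool.xor_false] at hr0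
    rw [hx q r hr, hr0, Bool.xor_comm]
  have hrec := hblocks.isUniformlyRecurrent hm
  refine ⟨fun K hKx hne hK hinv =>
    hrec.eq_closure_range_shift_iterate hKx hne hK (mapsTo_iff_image_subset.2 hinv), ?_⟩
  exact (hrec.preperfect_range_shift_iterate
    (hblocks.injective_shift_iterate hm)).perfect_closure.not_countable
    ⟨x, subset_closure ⟨0, rfl⟩⟩
end
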